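/- Let F be a field, H a finite subset of F with |H| = h ≥ 1, k ≥ 1, d ≥ 1, t natural numbers, and g : H^k → F a function. Suppose there exists a positive integer l with k·(h − 1)/d < l < t/(d·h^{k−1}) (i.e., l·d > k·(h−1) and l·d·h^{k−1} < t). Then there exists a polynomial P ∈ F[x₁,…,x_k, y], not identically zero, with (1,…,1,d)-weighted degree at most l·d, vanishing at (a, g(a)) for every a ∈ H^k, and such that every f ∈ F[x₁,…,x_k] of total degree at most d satisfying f(a) = g(a) for at least t points a ∈ H^k has y − f(x₁,…,x_k) dividing P(x₁,…,x_k, y) in F[x₁,…,x_k, y]. -/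

import Mathlib

/-! The `h^k + 1` monomials `x^v` (with every `vᵢ < h`) and `y` all have `(1,…,1,d)`-weighted
degree at most `max (k (h - 1)) d ≤ l d`, while the graph of `g` over `H^k` imposes only `h^k`
linear conditions, so some nonzero combination `P` of them vanishes on that graph. For `f` of
degree at most `d`, the substitution `Q = P(x, f(x))` has total degree at most the weighted degree
of `P`, and vanishes wherever `f` agrees with `g`. By Schwartz–Zippel a nonzero `Q` has at most
`l d h^(k-1) < t` zeros in `H^k`, so `Q = 0`, which means that `y - f` divides `P`. -/

open MvPolynomial Finset

namespace MvPolynomial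

theorem dvd_sub_bind₁ {σ R : Type*} [CommRing R] {D : MvPolynomial σ R}
    {φ : σ → MvPolynomial σ R} (hφ : ∀ i, D ∣ X i - φ i) (p : MvPolynomial σ R) :
    D ∣ p - bind₁ φ p := by
  have hmk : (Ideal.Quotient.mkₐ R (Ideal.span {D})).comp (bind₁ φ) =
      Ideal.Quotient.mkₐ R (Ideal.span {D}) :=
    algHom_ext fun i => by
      simpa [Ideal.Quotient.eq, Ideal.mem_span_singleton] using dvd_sub_comm.mp (hφ i)
  rw [← Ideal.mem_span_singleton, ← Ideal.Quotient.eq]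
  exact (DFunLike.congr_fun hmk p).symm

theorem totalDegree_bind₁_le {σ τ R : Type*} [CommSemiring R] {φ : σ → MvPolynomial τ R}
    {w : σ → ℕ} (hφ : ∀ i, (φ i).totalDegree ≤ w i) (p : MvPolynomial σ R) :
    (bind₁ φ p).totalDegree ≤ p.weightedTotalDegree w := by
  classical
  conv_lhs => rw [p.as_sum, map_sum]
  refine (totalDegree_finsetSum _ _).trans (Finset.sup_mono_fun fun m _ => ?_)
  rw [bind₁_monomial]
  refine (totalDegree_mul _ _).trans ?_
  rw [totalDegree_C, zero_add, Finsupp.weight_apply]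
  refine (totalDegree_finsetProd _ _).trans (Finset.sum_le_sum fun i _ => ?_)
  simp only [smul_eq_mul]
  exact (totalDegree_pow _ _).trans (Nat.mul_le_mul_left _ (hφ i))

theorem exists_ne_zero_mem_restrictSupport_eval_eq_zero {σ F : Type*} [Field F]
    (S : Finset (σ →₀ ℕ)) (pts : Finset (σ → F)) (hcard : #pts < #S) :
    ∃ p ∈ restrictSupport F (S : Set (σ →₀ ℕ)), p ≠ 0 ∧ ∀ x ∈ pts, eval x p = 0 := by
  let b := basisRestrictSupport F (S : Set (σ →₀ ℕ))
  have := Module.Finite.of_basis b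
  let evalPts : restrictSupport F (S : Set (σ →₀ ℕ)) →ₗ[F] (pts → F) :=
    LinearMap.pi fun x => (aeval x.1).toLinearMap ∘ₗ Submodule.subtype _
  have hker : LinearMap.ker evalPts ≠ ⊥ := LinearMap.ker_ne_bot_of_finrank_lt <| by
    simpa [Module.finrank_fintype_fun_eq_card, Module.finrank_eq_card_basis b] using hcard
  obtain ⟨⟨p, hpS⟩, hp, hp0⟩ := (Submodule.ne_bot_iff _).mp hker
  refine ⟨p, hpS, fun h => hp0 (by simp [h]), fun x hx => ?_⟩
  simpa [evalPts, coe_aeval_eq_eval] using congr_fun hp ⟨x, hx⟩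

theorem card_mul_le_totalDegree_mul_of_eval_eq_zero {R : Type*} [CommRing R] [IsDomain R]
    {n : ℕ} {p : MvPolynomial (Fin n) R} (hp : p ≠ 0) {S : Finset R} {s : Finset (Fin n → R)}
    (hs : s ⊆ Fintype.piFinset fun _ => S) (hzero : ∀ x ∈ s, eval x p = 0) :
    #s * #S ≤ p.totalDegree * #S ^ n := by
  classical
  obtain hS | hS := S.eq_empty_or_nonempty
  · simp [hS]
  have hzeros : #s ≤ #{x ∈ Fintype.piFinset fun _ => S | eval x p = 0} :=
    card_le_card fun x hx => mem_filter.mpr ⟨hs hx, hzero x hx⟩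
  have hschwartzZippel := schwartz_zippel_totalDegree hp S
  rw [div_le_div_iff₀ (by positivity) (by simpa using hS)] at hschwartzZippel
  exact_mod_cast (Nat.mul_le_mul_right _ hzeros).trans (by exact_mod_cast hschwartzZippel)

theorem eval_bind₁_snoc {R : Type*} [CommSemiring R] {n : ℕ} (f : MvPolynomial (Fin n) R)
    (p : MvPolynomial (Fin (n + 1)) R) (a : Fin n → R) :
    eval a (bind₁ (Fin.snoc X f) p) = eval (Fin.snoc a (eval a f)) p := by
  change eval₂Hom _ a _ = _
  rw [eval₂Hom_bind₁]
  change eval _ p = eval _ p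
  congr 2 with i
  refine Fin.lastCases ?_ (fun j => ?_) i <;> simp

theorem X_last_sub_rename_dvd_of_bind₁_snoc_eq_zero {R : Type*} [CommRing R] {n : ℕ}
    {f : MvPolynomial (Fin n) R} {p : MvPolynomial (Fin (n + 1)) R}
    (hp : bind₁ (Fin.snoc X f) p = 0) : X (Fin.last n) - rename Fin.castSucc f ∣ p := by
  let φ : Fin (n + 1) → MvPolynomial (Fin n) R := Fin.snoc X f
  have hφ : ∀ i, X (Fin.last n) - rename Fin.castSucc f ∣ X i - rename Fin.castSucc (φ i) :=
    Fin.lastCases (by simp [φ]) fun i => by simp [φ]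
  have hφp : bind₁ φ p = 0 := hp
  simpa [← rename_bind₁, hφp] using dvd_sub_bind₁ hφ p

end MvPolynomial

noncomputable def boxExponentsAndLast (k h : ℕ) : Finset (Fin (k + 1) →₀ ℕ) :=
  insert (Finsupp.single (Fin.last k) 1)
    ((Fintype.piFinset fun _ : Fin k => range h).image
      fun v => Finsupp.equivFunOnFinite.symm (Fin.snoc v 0))

theorem card_boxExponentsAndLast (k h : ℕ) : #(boxExponentsAndLast k h) = h ^ k + 1 := by
  have hinj : Function.Injective fun v : Fin k → ℕ =>
      Finsupp.equivFunOnFinite.symm (Fin.snoc v 0 : Fin (k + 1) → ℕ) :=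
    Finsupp.equivFunOnFinite.symm.injective.comp fun v w hvw => (Fin.snoc_injective2 hvw).1
  rw [boxExponentsAndLast, card_insert_of_notMem, card_image_of_injective _ hinj]
  · simp
  · simp only [mem_image, not_exists, not_and]
    intro v _ hv
    simpa using DFunLike.congr_fun hv (Fin.last k)

theorem weight_le_of_mem_boxExponentsAndLast {k h d : ℕ} {m : Fin (k + 1) →₀ ℕ}
    (hm : m ∈ boxExponentsAndLast k h) :
    Finsupp.weight (Fin.snoc (fun _ : Fin k => 1) d) m ≤ max (k * (h - 1)) d := by
  simp only [boxExponentsAndLast, mem_insert, mem_image, Fintype.mem_piFinset, mem_range] at hm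
  obtain rfl | ⟨v, hv, rfl⟩ := hm
  · simp [Finsupp.weight_single]
  · rw [Finsupp.weight_apply, Finsupp.sum_fintype _ _ (by simp), Fin.sum_univ_castSucc]
    simp only [Finsupp.coe_equivFunOnFinite_symm, Fin.snoc_castSucc, Fin.snoc_last,
      smul_eq_mul, mul_one, zero_mul, add_zero]
    calc ∑ i, v i ≤ ∑ _i : Fin k, (h - 1) := sum_le_sum fun i _ => Nat.le_pred_of_lt (hv i)
      _ = k * (h - 1) := by simp
      _ ≤ _ := le_max_left _ _

theorem sudan_list_decoding_multivariate_general
    (F : Type*) [Field F] (H : Finset F) (h k d t l : ℕ)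
    (hH : H.card = h) (hh : 1 ≤ h) (hk : 1 ≤ k)
    (hl : 1 ≤ l) (hl₁ : l * d > k * (h - 1)) (hl₂ : l * d * h ^ (k - 1) < t)
    (g : (Fin k → F) → F) :
    ∃ P : MvPolynomial (Fin (k + 1)) F, P ≠ 0 ∧
      P.weightedTotalDegree (Fin.snoc (fun _ : Fin k => 1) d) ≤ l * d ∧
      (∀ a : Fin k → F, (∀ i, a i ∈ H) →
        MvPolynomial.eval (Fin.snoc a (g a)) P = 0) ∧
      ∀ f : MvPolynomial (Fin k) F, f.totalDegree ≤ d →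
        (∃ s : Finset (Fin k → F), t ≤ s.card ∧
          (∀ a ∈ s, ∀ i, a i ∈ H) ∧ ∀ a ∈ s, MvPolynomial.eval a f = g a) →
        (MvPolynomial.X (Fin.last k) - MvPolynomial.rename Fin.castSucc f) ∣ P := by
  classical
  let graph := (Fintype.piFinset fun _ : Fin k => H).image
    fun a => (Fin.snoc a (g a) : Fin (k + 1) → F)
  have hgraph : #graph < #(boxExponentsAndLast k h) := by
    rw [card_boxExponentsAndLast, Nat.lt_succ_iff, ← hH, ← Fintype.card_piFinset_const]
    exact card_image_le
  obtain ⟨P, hPS, hP0, hPzero⟩ := exists_ne_zero_mem_restrictSupport_eval_eq_zero _ _ hgraph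
  have hPdeg : P.weightedTotalDegree (Fin.snoc (fun _ : Fin k => 1) d) ≤ l * d :=
    Finset.sup_le fun m hm => (weight_le_of_mem_boxExponentsAndLast (hPS hm)).trans
      (max_le hl₁.le (Nat.le_mul_of_pos_left d hl))
  have hPH (a : Fin k → F) (ha : ∀ i, a i ∈ H) : eval (Fin.snoc a (g a)) P = 0 :=
    hPzero _ (mem_image_of_mem _ (Fintype.mem_piFinset.mpr ha))
  refine ⟨P, hP0, hPdeg, hPH, ?_⟩
  rintro f hf ⟨s, hst, hsH, hsg⟩
  refine X_last_sub_rename_dvd_of_bind₁_snoc_eq_zero (by_contra fun hQ => ?_)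
  have hQdeg : (bind₁ (Fin.snoc X f) P).totalDegree ≤ l * d :=
    (totalDegree_bind₁_le (Fin.lastCases (by simpa) fun i => by simp) P).trans hPdeg
  have hschwartzZippel := card_mul_le_totalDegree_mul_of_eval_eq_zero hQ
    (fun a ha => Fintype.mem_piFinset.mpr (hsH a ha))
    (fun a ha => by rw [eval_bind₁_snoc, hsg a ha]; exact hPH a (hsH a ha))
  rw [hH] at hschwartzZippel
  refine lt_irrefl (t * h) ?_
  calc t * h ≤ #s * h := Nat.mul_le_mul_right h hst
    _ ≤ (bind₁ (Fin.snoc X f) P).totalDegree * h ^ k := hschwartzZippel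
    _ ≤ l * d * h ^ k := Nat.mul_le_mul_right _ hQdeg
    _ = l * d * h ^ (k - 1) * h := by rw [mul_assoc _ (h ^ _), ← pow_succ, Nat.sub_add_cancel hk]
    _ < t * h := Nat.mul_lt_mul_of_pos_right hl₂ hh

/-- **Theorem 1.** Suppose `|H| = h ≥ 1`, `k ≥ 1`, `d ≥ 1`, and there is a positive
integer `l` with `l·d > k·(h−1)` and `l·d·h^{k−1} < t`. Then there is a nonzero polynomial
`P ∈ F[x₁,…,x_k,y]` of `(1,…,1,d)`-weighted degree at most `l·d`, vanishing at `(a, g(a))`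
for all `a ∈ H^k`, such that every `f ∈ F[x₁,…,x_k]` of total degree at most `d` agreeing
with `g` on at least `t` points of `H^k` has `y − f` dividing `P`. -/
theorem sudan_list_decoding_multivariate
    (F : Type*) [Field F] (H : Finset F) (h k d t l : ℕ)
    (hH : H.card = h) (hh : 1 ≤ h) (hk : 1 ≤ k) (hd : 1 ≤ d)
    (hl : 1 ≤ l) (hl₁ : l * d > k * (h - 1)) (hl₂ : l * d * h ^ (k - 1) < t)
    (g : (Fin k → F) → F) :
    ∃ P : MvPolynomial (Fin (k + 1)) F, P ≠ 0 ∧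
      P.weightedTotalDegree (Fin.snoc (fun _ : Fin k => 1) d) ≤ l * d ∧
      (∀ a : Fin k → F, (∀ i, a i ∈ H) →
        MvPolynomial.eval (Fin.snoc a (g a)) P = 0) ∧
      ∀ f : MvPolynomial (Fin k) F, f.totalDegree ≤ d →
        (∃ s : Finset (Fin k → F), t ≤ s.card ∧
          (∀ a ∈ s, ∀ i, a i ∈ H) ∧ ∀ a ∈ s, MvPolynomial.eval a f = g a) →
        (MvPolynomial.X (Fin.last k) - MvPolynomial.rename Fin.castSucc f) ∣ P :=
  sudan_list_decoding_multivariate_general F H h k d t l hH hh hk hl hl₁ hl₂ g
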